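/- Let λ > 0 be such that S_λ := {m ∈ ℤ² : |m|² = λ} is nonempty, and set u(x) := Σ_{m ∈ S_λ} e^{2πi m·x}. Then ∫_{[0,1]²} |u(x)|⁴ dx = 3·|S_λ|² − 3·|S_λ|, where |S_λ| denotes the cardinality of S_λ. -/

import Mathlib

open MeasureTheory Real

noncomputable section

/-!
Expanding `|u|⁴ = u² · conj (u)²` and integrating term by term, the orthogonality of the characters
`x ↦ e^{2πi m·x}` on `[0,1]²` turns the integral into the additive energy of `S_λ`, the number of
quadruples `(a, b, c, d) ∈ S_λ⁴` with `a + b = c + d`. On a circle centred at the origin a chord is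
perpendicular to its midpoint, so a sum `a + b ≠ 0` determines the pair `{a, b}`, while `a + b = 0`
is attained by the `|S_λ|` pairs `(c, -c)`. Hence for each `a` there are
`|S_λ| + 1 + 2 (|S_λ| - 2) = 3 |S_λ| - 3` triples `(b, c, d)`, the three terms coming from `b = -a`,
`b = a` and the remaining `b`.
-/

open Finset
open scoped Combinatorics.Additive ComplexConjugate

theorem addEnergy_eq_sum_card_filter {α : Type*} [DecidableEq α] [Add α] (s : Finset α) :
    E[s] = ∑ x ∈ s ×ˢ s, #{y ∈ s ×ˢ s | x.1 + x.2 = y.1 + y.2} := by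
  simp only [addEnergy_eq_card_filter, card_filter, sum_product (s ×ˢ s) (s ×ˢ s)]

section Circle

variable {R : Type*} [CommRing R] [LinearOrder R] [IsStrictOrderedRing R]

theorem eq_zero_or_eq_zero_of_orthogonal {s u w : R × R} (hs : s ≠ 0)
    (hus : u.1 * s.1 + u.2 * s.2 = 0) (hws : w.1 * s.1 + w.2 * s.2 = 0)
    (huw : u.1 * w.1 + u.2 * w.2 = 0) : u = 0 ∨ w = 0 := by
  have hdet : u.1 * w.2 - u.2 * w.1 = 0 := by
    by_contra h
    refine hs (Prod.ext ?_ ?_)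
    · exact (mul_eq_zero.1 (by linear_combination w.2 * hus - u.2 * hws)).resolve_left h
    · exact (mul_eq_zero.1 (by linear_combination u.1 * hws - w.1 * hus)).resolve_left h
  have : (u.1 * u.1 + u.2 * u.2) * (w.1 * w.1 + w.2 * w.2) = 0 := by
    linear_combination (u.1 * w.1 + u.2 * w.2) * huw + (u.1 * w.2 - u.2 * w.1) * hdet
  rcases mul_eq_zero.1 this with h | h
  · exact .inl (Prod.ext_iff.2 (mul_self_add_mul_self_eq_zero.1 h))
  · exact .inr (Prod.ext_iff.2 (mul_self_add_mul_self_eq_zero.1 h))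

theorem eq_or_eq_swap_of_add_eq_add_of_sq_eq {r : R} {a b c d : R × R}
    (ha : a.1 ^ 2 + a.2 ^ 2 = r) (hb : b.1 ^ 2 + b.2 ^ 2 = r) (hc : c.1 ^ 2 + c.2 ^ 2 = r)
    (hd : d.1 ^ 2 + d.2 ^ 2 = r) (hcd : c + d = a + b) (hab : a + b ≠ 0) :
    (c, d) = (a, b) ∨ (c, d) = (b, a) := by
  obtain rfl := eq_sub_of_add_eq' hcd
  simp only [Prod.fst_sub, Prod.snd_sub, Prod.fst_add, Prod.snd_add] at hd
  have half {x : R} (h : 2 * x = 0) : x = 0 := (mul_eq_zero.1 h).resolve_left two_ne_zero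
  -- `a - c` and `c - b` are orthogonal to `a + b` and to each other, by expanding `|a + b - c|² = r`.
  have hacs : (a - c).1 * (a + b).1 + (a - c).2 * (a + b).2 = 0 := half <| by
    simp only [Prod.fst_sub, Prod.snd_sub, Prod.fst_add, Prod.snd_add]
    linear_combination ha - hb - hc + hd
  have hcbs : (c - b).1 * (a + b).1 + (c - b).2 * (a + b).2 = 0 := half <| by
    simp only [Prod.fst_sub, Prod.snd_sub, Prod.fst_add, Prod.snd_add]
    linear_combination ha - hb + hc - hd
  have hperp : (a - c).1 * (c - b).1 + (a - c).2 * (c - b).2 = 0 := half <| by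
    simp only [Prod.fst_sub, Prod.snd_sub]
    linear_combination ha + hb - hc - hd
  rcases eq_zero_or_eq_zero_of_orthogonal hab hacs hcbs hperp with h | h
  · obtain rfl := (sub_eq_zero.1 h).symm
    left; simp
  · obtain rfl := sub_eq_zero.1 h
    right; simp

variable {r : R} {S : Finset (R × R)}

theorem card_filter_add_eq_add_of_sq_eq (hS : ∀ m ∈ S, m.1 ^ 2 + m.2 ^ 2 = r)
    (hneg : ∀ m ∈ S, -m ∈ S) {a b : R × R} (ha : a ∈ S) (hb : b ∈ S) :
    #{y ∈ S ×ˢ S | a + b = y.1 + y.2} = if b = -a then #S else if b = a then 1 else 2 := by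
  by_cases hba : b = -a
  · subst hba
    rw [if_pos rfl,
      ← card_image_of_injective S (f := fun c ↦ (c, -c)) fun c c' h ↦ congrArg Prod.fst h]
    congr 1
    ext ⟨c, d⟩
    simp only [mem_filter, mem_product, mem_image, Prod.mk.injEq, add_neg_cancel]
    constructor
    · rintro ⟨⟨hc, -⟩, h⟩
      exact ⟨c, hc, rfl, neg_eq_of_add_eq_zero_right h.symm⟩
    · rintro ⟨c, hc, rfl, rfl⟩
      exact ⟨⟨hc, hneg c hc⟩, (add_neg_cancel c).symm⟩
  have hfiber : {y ∈ S ×ˢ S | a + b = y.1 + y.2} = {(a, b), (b, a)} := by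
    ext y
    simp only [mem_filter, mem_product, mem_insert, mem_singleton]
    constructor
    · rintro ⟨⟨hc, hd⟩, h⟩
      refine eq_or_eq_swap_of_add_eq_add_of_sq_eq (hS a ha) (hS b hb) (hS _ hc) (hS _ hd) h.symm ?_
      rwa [Ne, add_eq_zero_iff_eq_neg']
    · rintro (rfl | rfl)
      · exact ⟨⟨ha, hb⟩, rfl⟩
      · exact ⟨⟨hb, ha⟩, add_comm a b⟩
  rw [if_neg hba, hfiber]
  split_ifs with hab
  · simp [hab]
  · exact card_pair fun h ↦ hab (congrArg Prod.fst h).symm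

theorem addEnergy_eq_of_sq_eq (hr : r ≠ 0) (hS : ∀ m ∈ S, m.1 ^ 2 + m.2 ^ 2 = r)
    (hneg : ∀ m ∈ S, -m ∈ S) : (E[S] : ℤ) = 3 * #S ^ 2 - 3 * #S := by
  have hrow : ∀ a ∈ S, ∑ b ∈ S, (#{y ∈ S ×ˢ S | a + b = y.1 + y.2} : ℤ) = 3 * #S - 3 := by
    intro a ha
    have hna : -a ≠ a := fun h ↦ hr <| by
      simp only [Prod.ext_iff, Prod.fst_neg, Prod.snd_neg, CharZero.neg_eq_self_iff] at h
      rw [← hS a ha, h.1, h.2]; ring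
    calc ∑ b ∈ S, (#{y ∈ S ×ˢ S | a + b = y.1 + y.2} : ℤ)
        = ∑ b ∈ S, (2 + (if b = -a then (#S : ℤ) - 2 else 0) - if b = a then 1 else 0) := by
          refine sum_congr rfl fun b hb ↦ ?_
          rw [card_filter_add_eq_add_of_sq_eq hS hneg ha hb]
          split_ifs with hb₁ hb₂ hb₂
          · exact absurd (hb₁.symm.trans hb₂) hna
          all_goals norm_num
      _ = 3 * #S - 3 := by
        simp only [sum_sub_distrib, sum_add_distrib, sum_const, Int.nsmul_eq_mul, sum_ite_eq',
          hneg a ha, ha, if_true]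
        ring
  rw [addEnergy_eq_sum_card_filter, sum_product]
  push_cast
  rw [sum_congr rfl hrow, sum_const, nsmul_eq_mul]
  ring

end Circle

def torusExp (m : ℤ × ℤ) (x : ℝ × ℝ) : ℂ :=
  Complex.exp (2 * (Real.pi : ℂ) * Complex.I * ((m.1 : ℂ) * (x.1 : ℂ) + (m.2 : ℂ) * (x.2 : ℂ)))

theorem torusExp_add (m k : ℤ × ℤ) (x : ℝ × ℝ) :
    torusExp (m + k) x = torusExp m x * torusExp k x := by
  simp only [torusExp, ← Complex.exp_add, Prod.fst_add, Prod.snd_add]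
  push_cast
  ring_nf

theorem conj_torusExp (m : ℤ × ℤ) (x : ℝ × ℝ) : conj (torusExp m x) = torusExp (-m) x := by
  simp only [torusExp, ← Complex.exp_conj, map_mul, map_add, Complex.conj_I, map_ofNat,
    map_intCast, Complex.conj_ofReal, Prod.fst_neg, Prod.snd_neg]
  push_cast
  ring_nf

theorem continuous_torusExp (m : ℤ × ℤ) : Continuous (torusExp m) := by
  unfold torusExp; fun_prop

theorem integral_Icc_exp_two_pi_I_int_mul (n : ℤ) :
    ∫ t in Set.Icc (0 : ℝ) 1, Complex.exp (2 * π * Complex.I * n * t) =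
      if n = 0 then 1 else 0 := by
  rw [integral_Icc_eq_integral_Ioc, ← intervalIntegral.integral_of_le zero_le_one]
  split_ifs with hn
  · simp [hn]
  have hc : 2 * π * Complex.I * n ≠ 0 := by simp [Real.pi_ne_zero, hn]
  rw [integral_exp_mul_complex hc, Complex.ofReal_one, mul_one, Complex.ofReal_zero, mul_zero,
    Complex.exp_zero, show 2 * π * Complex.I * n = n * (2 * π * Complex.I) by ring,
    Complex.exp_int_mul_two_pi_mul_I, sub_self, zero_div]

theorem integral_torusExp (m : ℤ × ℤ) :
    ∫ x in Set.Icc (0 : ℝ) 1 ×ˢ Set.Icc (0 : ℝ) 1, torusExp m x = if m = 0 then 1 else 0 := by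
  have hsplit (x : ℝ × ℝ) : torusExp m x =
      Complex.exp (2 * π * Complex.I * m.1 * x.1) * Complex.exp (2 * π * Complex.I * m.2 * x.2) := by
    rw [torusExp, ← Complex.exp_add]; ring_nf
  simp_rw [Measure.volume_eq_prod, hsplit]
  rw [setIntegral_prod_mul (fun t : ℝ ↦ Complex.exp (2 * π * Complex.I * m.1 * t))
    (fun t : ℝ ↦ Complex.exp (2 * π * Complex.I * m.2 * t)), integral_Icc_exp_two_pi_I_int_mul,
    integral_Icc_exp_two_pi_I_int_mul]
  simp only [Prod.ext_iff, Prod.fst_zero, Prod.snd_zero, ite_and, mul_ite, mul_one, mul_zero]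
  split_ifs <;> rfl

theorem ofReal_norm_sum_torusExp_pow_four (S : Finset (ℤ × ℤ)) (x : ℝ × ℝ) :
    ((‖∑ m ∈ S, torusExp m x‖ ^ 4 : ℝ) : ℂ) =
      ∑ p ∈ (S ×ˢ S) ×ˢ (S ×ˢ S), torusExp (p.1.1 + p.1.2 - (p.2.1 + p.2.2)) x := by
  set z := ∑ m ∈ S, torusExp m x
  have hsq : z * z = ∑ q ∈ S ×ˢ S, torusExp (q.1 + q.2) x := by
    simp only [z, sum_mul_sum, sum_product, torusExp_add]
  have hnorm : ((‖z‖ ^ 4 : ℝ) : ℂ) = z * z * conj (z * z) := by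
    rw [Complex.mul_conj', norm_mul]; push_cast; ring
  rw [hnorm, hsq, map_sum, sum_mul_sum, ← sum_product']
  simp only [conj_torusExp, ← torusExp_add, sub_eq_add_neg]

theorem integral_norm_sum_torusExp_pow_four (S : Finset (ℤ × ℤ)) :
    ∫ x in Set.Icc (0 : ℝ) 1 ×ˢ Set.Icc (0 : ℝ) 1, ‖∑ m ∈ S, torusExp m x‖ ^ 4 = E[S] := by
  apply Complex.ofReal_injective
  rw [← integral_complex_ofReal]
  simp_rw [ofReal_norm_sum_torusExp_pow_four]
  rw [integral_finsetSum _ fun p _ ↦ (continuous_torusExp _).continuousOn.integrableOn_compact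
    (isCompact_Icc.prod isCompact_Icc)]
  simp only [integral_torusExp, sub_eq_zero, sum_boole, addEnergy_eq_card_filter,
    Complex.ofReal_natCast]

theorem l4_norm_of_circle_exponential_sum
    (lam : ℝ) (hlam : 0 < lam) (S : Finset (ℤ × ℤ))
    (hS : ∀ m : ℤ × ℤ, m ∈ S ↔ ((m.1 : ℝ) ^ 2 + (m.2 : ℝ) ^ 2 = lam))
    (hne : S.Nonempty) :
    (∫ x in Set.Icc (0 : ℝ) 1 ×ˢ Set.Icc (0 : ℝ) 1,
        ‖∑ m ∈ S, Complex.exp (2 * (Real.pi : ℂ) * Complex.I *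
          ((m.1 : ℂ) * (x.1 : ℂ) + (m.2 : ℂ) * (x.2 : ℂ)))‖ ^ 4) =
      3 * (S.card : ℝ) ^ 2 - 3 * (S.card : ℝ) := by
  obtain ⟨a₀, ha₀⟩ := hne
  have hr : ((a₀.1 ^ 2 + a₀.2 ^ 2 : ℤ) : ℝ) = lam := by push_cast; exact (hS a₀).1 ha₀
  have hcircle : ∀ m ∈ S, m.1 ^ 2 + m.2 ^ 2 = a₀.1 ^ 2 + a₀.2 ^ 2 := fun m hm ↦ by
    exact_mod_cast ((hS m).1 hm).trans hr.symm
  have hneg : ∀ m ∈ S, -m ∈ S := fun m hm ↦ (hS (-m)).2 (by simpa using (hS m).1 hm)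
  have hr₀ : a₀.1 ^ 2 + a₀.2 ^ 2 ≠ 0 := fun h ↦ hlam.ne' (by rw [← hr, h, Int.cast_zero])
  change ∫ x in _, ‖∑ m ∈ S, torusExp m x‖ ^ 4 = _
  rw [integral_norm_sum_torusExp_pow_four]
  exact_mod_cast addEnergy_eq_of_sq_eq hr₀ hcircle hneg
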